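/- For every n ∈ ℕ, the product U_n · U^{-1} equals the (n+1)×(n+1) identity matrix, where U_n is the weight matrix of the U-type network of order n and U^{-1} is the weight matrix of the same network under the inverse weighting. -/

import Mathlib

/-!
Both matrices are products of one unit upper-bidiagonal transfer matrix per step:
`U = E₀ ⋯ Eₙ₋₁` and `U⁻¹ = F₀ ⋯ Fₙ₋₁`, where the entry `(a, a + 1)` of `Eⱼ` is `t (a - j) (a + 1)`
for `a ≥ j` and that of `Fᵢ` is `-t i (a + 1)` for `a ≥ i`. Cut `Eⱼ` down to the rows `≥ m`
and `Fᵢ` to the rows `< m`. For `m = i + j` the two rises from height `m` cancel, so a cut `Eⱼ`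
passes a cut `Fᵢ` at the price of moving both cuts by one. Sweeping `Eₙ₋₁, …, E₀` in turn
through all the `Fᵢ` pushes the cuts of the `Eⱼ` above `n`, where they become the identity, and
leaves each `Fᵢ` cut below height `i`, where it is the identity too.
-/

/-- The heights of a `U^m_n`-path of order `n` (the abscissas `x i = m + i` are
determined, so only the heights `y i ∈ {0, …, n}`, encoded as `Fin (n+1)`, are recorded):
`y (k+1) ∈ {y k, y k + 1}` and a rise step at position `k` forces `y k ≥ k`. -/
def IsUPath (n : ℕ) (y : Fin (n + 1) → Fin (n + 1)) : Prop :=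
  ∀ k : Fin n,
    ((y k.succ = y k.castSucc ∨ (y k.succ : ℕ) = (y k.castSucc : ℕ) + 1) ∧
      ((y k.succ : ℕ) = (y k.castSucc : ℕ) + 1 → (k : ℕ) ≤ (y k.castSucc : ℕ)))

/-- The weight of a `U`-type path: a rise step from `(k, j)` to `(k+1, j+1)` has weight
`t (j - k) (j + 1)` and a horizontal step has weight `1`; the weight of the path is the
product of the weights of its steps. -/
def uweight {R : Type*} [CommRing R] (n : ℕ) (t : ℕ → ℕ → R)
    (y : Fin (n + 1) → Fin (n + 1)) : R :=
  ∏ k : Fin n,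
    if (y k.succ : ℕ) = (y k.castSucc : ℕ) + 1
    then t ((y k.castSucc : ℕ) - (k : ℕ)) ((y k.castSucc : ℕ) + 1) else 1

open scoped Classical in
/-- The matrix `U n`: its `(i, j)` entry is the sum of the weights of all `U^0_n`-paths
with `y 0 = i` and `y n = j`. -/
noncomputable def Umat {R : Type*} [CommRing R] (n : ℕ) (t : ℕ → ℕ → R) :
    Matrix (Fin (n + 1)) (Fin (n + 1)) R :=
  Matrix.of fun i j =>
    ∑ y ∈ Finset.univ.filter
        (fun y : Fin (n + 1) → Fin (n + 1) => IsUPath n y ∧ y 0 = i ∧ y (Fin.last n) = j),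
      uweight n t y

/-- The inverse weighting of a `U`-type path: a rise step from `(k, j-1)` to
`(k+1, j)` has weight `-t k j` and a horizontal step has weight `1`; the weight of the
path is the product of the weights of its steps. -/
def uinvweight {R : Type*} [CommRing R] (n : ℕ) (t : ℕ → ℕ → R)
    (y : Fin (n + 1) → Fin (n + 1)) : R :=
  ∏ k : Fin n,
    if (y k.succ : ℕ) = (y k.castSucc : ℕ) + 1
    then -t (k : ℕ) (y k.succ : ℕ) else 1

open scoped Classical in
/-- The matrix `U⁻¹`: its `(i, j)` entry is the sum of the inverse weights of all
`U^0_n`-paths with `y 0 = i` and `y n = j`. -/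
noncomputable def UinvMat {R : Type*} [CommRing R] (n : ℕ) (t : ℕ → ℕ → R) :
    Matrix (Fin (n + 1)) (Fin (n + 1)) R :=
  Matrix.of fun i j =>
    ∑ y ∈ Finset.univ.filter
        (fun y : Fin (n + 1) → Fin (n + 1) => IsUPath n y ∧ y 0 = i ∧ y (Fin.last n) = j),
      uinvweight n t y

theorem Matrix.list_prod_map_range_apply {ι R : Type*} [Fintype ι] [DecidableEq ι]
    [CommSemiring R] (M : ℕ → Matrix ι ι R) (m : ℕ) (i j : ι) :
    ((List.range m).map M).prod i j =
      ∑ y : Fin (m + 1) → ι with y 0 = i ∧ y (Fin.last m) = j,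
        ∏ k : Fin m, M k (y k.castSucc) (y k.succ) := by
  induction m generalizing j with
  | zero =>
    simp only [List.range_zero, List.map_nil, List.prod_nil, Finset.sum_filter]
    rw [← (Equiv.funUnique (Fin 1) ι).symm.sum_comp]
    simp [ite_and, Matrix.one_apply]
  | succ m ih =>
    rw [List.range_succ, List.map_append, List.prod_append, List.map_singleton,
      List.prod_singleton, Matrix.mul_apply]
    simp_rw [ih, Finset.sum_mul, Finset.sum_filter]
    rw [Finset.sum_comm]
    conv_rhs => rw [← (Fin.snocEquiv fun _ => ι).sum_comp, Fintype.sum_prod_type, Finset.sum_comm]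
    simp only [Fin.snocEquiv, Equiv.coe_fn_mk, Fin.prod_univ_castSucc, Fin.succ_castSucc,
      Fin.snoc_castSucc, Fin.snoc_last, ite_and]
    simp [Finset.sum_ite_eq, Finset.sum_ite_eq']

namespace UNetwork

variable {R : Type*} [CommRing R]

def superdiag (n : ℕ) (f : ℕ → R) : Matrix (Fin (n + 1)) (Fin (n + 1)) R :=
  Matrix.of fun a b => if (b : ℕ) = a + 1 then f a else 0

def bidiag (n : ℕ) (f : ℕ → R) : Matrix (Fin (n + 1)) (Fin (n + 1)) R :=
  1 + superdiag n f

theorem superdiag_mul_superdiag (n : ℕ) (f g : ℕ → R) :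
    superdiag n f * superdiag n g =
      Matrix.of fun a b : Fin (n + 1) => if (b : ℕ) = a + 2 then f a * g (a + 1) else 0 := by
  ext a b
  simp only [superdiag, Matrix.mul_apply, Matrix.of_apply, ite_mul, zero_mul, mul_ite, mul_zero]
  by_cases hb : (b : ℕ) = a + 2
  · rw [if_pos hb, Finset.sum_eq_single ⟨a + 1, by omega⟩]
    · simp [hb]
    · intro c _ hc
      rw [if_neg fun h => hc (Fin.ext h)]
      split_ifs <;> rfl
    · simp
  · rw [if_neg hb]
    refine Finset.sum_eq_zero fun c _ => ?_
    split_ifs <;> first | rfl | omega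

theorem bidiag_mul_bidiag_eq {n : ℕ} {f g f' g' : ℕ → R}
    (hsum : ∀ a, f a + g a = f' a + g' a) (hprod : ∀ a, f a * g (a + 1) = f' a * g' (a + 1)) :
    bidiag n f * bidiag n g = bidiag n f' * bidiag n g' := by
  ext a b
  simp only [bidiag, add_mul, mul_add, one_mul, mul_one, Matrix.add_apply,
    superdiag_mul_superdiag]
  simp only [superdiag, Matrix.of_apply]
  split_ifs
  · omega
  · linear_combination hsum a
  · linear_combination hprod a
  · rfl

theorem bidiag_congr {n : ℕ} {f g : ℕ → R} (h : ∀ a < n, f a = g a) :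
    bidiag n f = bidiag n g := by
  ext a b
  simp only [bidiag, superdiag, Matrix.add_apply, Matrix.of_apply]
  split_ifs with hb
  · rw [h a (by omega)]
  · rfl

theorem bidiag_eq_one {n : ℕ} {f : ℕ → R} (h : ∀ a < n, f a = 0) : bidiag n f = 1 := by
  rw [bidiag_congr (g := 0) h, bidiag, add_eq_left]
  ext a b
  simp [superdiag]

/-- The transfer matrix of step `k` of a `U`-type network in which a rise from height `a`
has weight `c k a`. -/
def transferMat (n : ℕ) (c : ℕ → ℕ → R) (k : ℕ) : Matrix (Fin (n + 1)) (Fin (n + 1)) R :=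
  bidiag n fun a => if k ≤ a then c k a else 0

theorem transferMat_apply (n : ℕ) (c : ℕ → ℕ → R) (k : ℕ) (a b : Fin (n + 1)) :
    transferMat n c k a b =
      if (b = a ∨ (b : ℕ) = a + 1) ∧ ((b : ℕ) = a + 1 → k ≤ a) then
        (if (b : ℕ) = a + 1 then c k a else 1) else 0 := by
  simp only [transferMat, bidiag, superdiag, Matrix.add_apply, Matrix.one_apply,
    Matrix.of_apply, Fin.ext_iff]
  split_ifs <;> first | omega | simp_all

open scoped Classical in
theorem prod_transferMat_apply (n : ℕ) (c : ℕ → ℕ → R) (y : Fin (n + 1) → Fin (n + 1)) :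
    ∏ k : Fin n, transferMat n c k (y k.castSucc) (y k.succ) =
      if IsUPath n y then
        ∏ k : Fin n, if (y k.succ : ℕ) = y k.castSucc + 1 then c k (y k.castSucc) else 1
      else 0 := by
  simp only [transferMat_apply, Fintype.prod_ite_zero]
  congr 1

open scoped Classical in
theorem sum_isUPath_eq_list_prod_apply (n : ℕ) (c : ℕ → ℕ → R) (i j : Fin (n + 1)) :
    ∑ y : Fin (n + 1) → Fin (n + 1) with IsUPath n y ∧ y 0 = i ∧ y (Fin.last n) = j,
        ∏ k : Fin n, (if (y k.succ : ℕ) = y k.castSucc + 1 then c k (y k.castSucc) else 1) =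
      ((List.range n).map (transferMat n c)).prod i j := by
  simp only [Matrix.list_prod_map_range_apply, Finset.sum_filter]
  refine Finset.sum_congr rfl fun y _ => ?_
  rw [prod_transferMat_apply]
  by_cases hy : IsUPath n y <;> simp [hy]

theorem Umat_eq_list_prod (n : ℕ) (t : ℕ → ℕ → R) :
    Umat n t = ((List.range n).map (transferMat n fun k a => t (a - k) (a + 1))).prod := by
  ext i j
  rw [← sum_isUPath_eq_list_prod_apply]
  rfl

theorem UinvMat_eq_list_prod (n : ℕ) (t : ℕ → ℕ → R) :
    UinvMat n t = ((List.range n).map (transferMat n fun k a => -t k (a + 1))).prod := by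
  ext i j
  rw [← sum_isUPath_eq_list_prod_apply]
  refine Finset.sum_congr rfl fun y _ => Finset.prod_congr rfl fun k _ => ?_
  split_ifs with h
  · rw [h]
  · rfl

-- `truncU n t j m` is step `j` of `U` (which is `truncU n t j j`) cut down to its rises from
-- heights `≥ m`; `truncV n t i m` is step `i` of `U⁻¹` cut down to its rises from heights `< m`.
def truncU (n : ℕ) (t : ℕ → ℕ → R) (j m : ℕ) : Matrix (Fin (n + 1)) (Fin (n + 1)) R :=
  bidiag n fun a => if m ≤ a then t (a - j) (a + 1) else 0

def truncV (n : ℕ) (t : ℕ → ℕ → R) (i m : ℕ) : Matrix (Fin (n + 1)) (Fin (n + 1)) R :=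
  bidiag n fun a => if i ≤ a ∧ a < m then -t i (a + 1) else 0

theorem truncU_eq_one {n : ℕ} (t : ℕ → ℕ → R) (j : ℕ) {m : ℕ} (hm : n ≤ m) :
    truncU n t j m = 1 :=
  bidiag_eq_one fun _ ha => if_neg (by omega)

theorem truncV_self (n : ℕ) (t : ℕ → ℕ → R) (i : ℕ) : truncV n t i i = 1 :=
  bidiag_eq_one fun _ _ => if_neg (by omega)

theorem truncV_of_le {n : ℕ} (t : ℕ → ℕ → R) (i : ℕ) {m : ℕ} (hm : n ≤ m) :
    truncV n t i m = transferMat n (fun k a => -t k (a + 1)) i :=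
  bidiag_congr fun a ha => by simp only [show a < m by omega, and_true]

-- At height `m = i + j` the rise of step `j` of `U` weighs `t (m - j) (m + 1) = t i (m + 1)`,
-- cancelling the rise of step `i` of `U⁻¹`, so the cut can move past this height.
theorem truncU_mul_truncV (n : ℕ) (t : ℕ → ℕ → R) {i j m : ℕ} (hm : m = i + j) :
    truncU n t j m * truncV n t i (m + 1) = truncV n t i m * truncU n t j (m + 1) := by
  apply bidiag_mul_bidiag_eq
  · intro a
    split_ifs <;> first | omega | (rw [show a - j = i by omega]; ring) | ring
  · intro a
    split_ifs <;> first | omega | ring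

theorem truncU_mul_list_prod_truncV (n : ℕ) (t : ℕ → ℕ → R) (j k : ℕ) :
    truncU n t j j * ((List.range k).map fun i => truncV n t i (j + 1 + i)).prod =
      ((List.range k).map fun i => truncV n t i (j + i)).prod * truncU n t j (j + k) := by
  induction k with
  | zero => simp
  | succ k ih =>
    simp only [List.range_succ, List.map_append, List.prod_append, List.map_singleton,
      List.prod_singleton]
    rw [← mul_assoc, ih, mul_assoc, show j + 1 + k = j + k + 1 by omega,
      truncU_mul_truncV n t (by omega), ← mul_assoc, ← add_assoc]

theorem list_prod_truncU_mul_list_prod_truncV (n : ℕ) (t : ℕ → ℕ → R) (k : ℕ) :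
    ((List.range k).map fun j => truncU n t j j).prod *
        ((List.range n).map fun i => truncV n t i (k + i)).prod =
      ((List.range n).map fun i => truncV n t i i).prod := by
  induction k with
  | zero => simp
  | succ k ih =>
    simp only [List.range_succ, List.map_append, List.prod_append, List.map_singleton,
      List.prod_singleton]
    rw [mul_assoc, truncU_mul_list_prod_truncV, truncU_eq_one t k (by omega), mul_one, ih]

end UNetwork

open UNetwork

/-- The product of the weight matrix `U n` of the `U`-type network of order `n` with
the weight matrix `U⁻¹` of the same network under the inverse weighting is the
`(n+1) × (n+1)` identity matrix. -/
theorem stmt18 {R : Type*} [CommRing R] (n : ℕ) (t : ℕ → ℕ → R) :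
    Umat n t * UinvMat n t = 1 := by
  have hU : Umat n t = ((List.range n).map fun j => truncU n t j j).prod :=
    Umat_eq_list_prod n t
  have hV : UinvMat n t = ((List.range n).map fun i => truncV n t i (n + i)).prod := by
    rw [UinvMat_eq_list_prod]
    exact congrArg _ (List.map_congr_left fun i _ => (truncV_of_le t i (by omega)).symm)
  rw [hU, hV, list_prod_truncU_mul_list_prod_truncV]
  exact List.prod_eq_one (by simp [truncV_self])
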